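/- arXiv:math/0607316 — 3 statements merged into one kernel-verified Lean document; each statement's English description precedes it below -/
import Mathlib

section
/- Removal of interior singularities for finite-energy holomorphic maps (the flat-target case of Theorem 3.7, case (symp, interior)): Let n ≥ 1 and let B ⊆ ℂ be the open unit disc. Suppose u : B∖{0} → ℂⁿ is holomorphic on B∖{0} and has finite energy, ∫_{B∖{0}} ‖u′(z)‖² dλ(z) < ∞, where λ is Lebesgue measure on ℂ ≅ ℝ². Then u extends to a holomorphic map on B: there exists a holomorphic ũ : B → ℂⁿ with ũ(z) = u(z) for all z ∈ B∖{0}. -/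
open MeasureTheory Metric Real Set Filter Asymptotics

section helpers

variable {E : Type*} [NormedAddCommGroup E] [NormedSpace ℂ E] [CompleteSpace E]

lemma my_circle_mean_eq {f : ℂ → E} {c : ℂ} {ρ : ℝ} (hρ : 0 < ρ)
    (hf : DifferentiableOn ℂ f (closedBall c ρ)) :
    (∫ θ in (0:ℝ)..(2 * π), f (circleMap c ρ θ)) = (2 * π : ℝ) • f c := by
  have hd : DiffContOnCl ℂ f (ball c ρ) :=
    ⟨hf.mono ball_subset_closedBall, hf.continuousOn.mono (by rw [closure_ball c hρ.ne'])⟩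
  have h := hd.circleIntegral_sub_inv_smul (mem_ball_self hρ)
  rw [circleIntegral] at h
  have hcongr : ∀ θ : ℝ,
      deriv (circleMap c ρ) θ • ((circleMap c ρ θ - c)⁻¹ • f (circleMap c ρ θ))
        = Complex.I • f (circleMap c ρ θ) := by
    intro θ
    rw [deriv_circleMap, circleMap_sub_center, smul_smul, mul_comm, ← mul_assoc,
      inv_mul_cancel₀ (circleMap_ne_center hρ.ne'), one_mul]
  simp only [hcongr] at h
  rw [intervalIntegral.integral_smul] at h
  have h2 : (2 * ↑π * Complex.I : ℂ) • f c = Complex.I • ((2 * π : ℝ) • f c) := by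
    rw [mul_comm, mul_smul]
    congr 1
    rw [show ((2:ℂ) * ↑π) = ((2 * π : ℝ) : ℂ) by push_cast; ring]
    rfl
  rw [h2] at h
  exact smul_right_injective E Complex.I_ne_zero h

lemma my_circle_mean_norm_le {f : ℂ → E} {c : ℂ} {ρ : ℝ} (hρ : 0 < ρ)
    (hf : DifferentiableOn ℂ f (closedBall c ρ)) :
    2 * π * ‖f c‖ ≤ ∫ θ in Ioo (-π) π, ‖f (circleMap c ρ θ)‖ := by
  have h1 : 2 * π * ‖f c‖ = ‖∫ θ in (0:ℝ)..(2 * π), f (circleMap c ρ θ)‖ := by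
    rw [my_circle_mean_eq hρ hf, norm_smul, Real.norm_eq_abs,
      abs_of_nonneg (by positivity : (0:ℝ) ≤ 2 * π)]
  have h2 : ‖∫ θ in (0:ℝ)..(2 * π), f (circleMap c ρ θ)‖
      ≤ ∫ θ in (0:ℝ)..(2 * π), ‖f (circleMap c ρ θ)‖ :=
    intervalIntegral.norm_integral_le_integral_norm (by positivity)
  have hper : Function.Periodic (fun θ => ‖f (circleMap c ρ θ)‖) (2 * π) := fun θ => by
    simp [periodic_circleMap c ρ θ]
  have h3 := hper.intervalIntegral_add_eq (-π) 0
  rw [show -π + 2 * π = π by ring, show (0:ℝ) + 2 * π = 2 * π by ring] at h3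
  have h4 : (∫ θ in (-π)..π, ‖f (circleMap c ρ θ)‖)
      = ∫ θ in Ioo (-π) π, ‖f (circleMap c ρ θ)‖ := by
    rw [intervalIntegral.integral_of_le (by linarith [pi_pos]),
      MeasureTheory.integral_Ioc_eq_integral_Ioo]
  calc 2 * π * ‖f c‖ = ‖∫ θ in (0:ℝ)..(2 * π), f (circleMap c ρ θ)‖ := h1
    _ ≤ ∫ θ in (0:ℝ)..(2 * π), ‖f (circleMap c ρ θ)‖ := h2
    _ = ∫ θ in Ioo (-π) π, ‖f (circleMap c ρ θ)‖ := by rw [← h3, h4]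

end helpers

lemma my_mean_le_integral {E : Type*} [NormedAddCommGroup E] [NormedSpace ℂ E] [CompleteSpace E]
    {f : ℂ → E} {c : ℂ} {R : ℝ} (hR : 0 < R)
    (hf : DifferentiableOn ℂ f (closedBall c R)) :
    π * R ^ 2 * ‖f c‖ ≤ ∫ w in ball c R, ‖f w‖ := by
  set G : ℝ × ℝ → ℝ := fun p => p.1 * ‖f (circleMap c p.1 p.2)‖ with hGdef
  have hcm : Continuous fun p : ℝ × ℝ => circleMap c p.1 p.2 := by
    simp only [circleMap]
    continuity
  have hmapsto : MapsTo (fun p : ℝ × ℝ => circleMap c p.1 p.2)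
      (Icc 0 R ×ˢ Icc (-π) π) (closedBall c R) := fun p hp =>
    (closedBall_subset_closedBall hp.1.2) (circleMap_mem_closedBall c hp.1.1 p.2)
  have hGcont : ContinuousOn G (Icc 0 R ×ˢ Icc (-π) π) :=
    (continuous_fst.continuousOn).mul
      ((hf.continuousOn.comp hcm.continuousOn hmapsto).norm)
  have hGint : IntegrableOn G (Ioo 0 R ×ˢ Ioo (-π) π) :=
    (hGcont.integrableOn_compact (isCompact_Icc.prod isCompact_Icc)).mono_set
      (prod_mono Ioo_subset_Icc_self Ioo_subset_Icc_self)
  have hsymm : ∀ p : ℝ × ℝ, c + Complex.polarCoord.symm p = circleMap c p.1 p.2 := by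
    intro p
    rw [Complex.polarCoord_symm_apply]
    simp [circleMap, Complex.exp_mul_I]
  have key : ∫ w in ball c R, ‖f w‖ = ∫ p in Ioo 0 R ×ˢ Ioo (-π) π, G p := by
    calc ∫ w in ball c R, ‖f w‖
        = ∫ w, (ball c R).indicator (fun w => ‖f w‖) w :=
          (integral_indicator measurableSet_ball).symm
      _ = ∫ w, (ball c R).indicator (fun w => ‖f w‖) (c + w) :=
          (integral_add_left_eq_self _ c).symm
      _ = ∫ w, (ball (0:ℂ) R).indicator (fun w => ‖f (c + w)‖) w := by
          congr 1
          funext w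
          by_cases hw : w ∈ ball (0:ℂ) R
          · rw [indicator_of_mem hw,
              indicator_of_mem (by simpa [mem_ball, dist_eq_norm] using hw)]
          · rw [indicator_of_notMem hw,
              indicator_of_notMem (by simpa [mem_ball, dist_eq_norm] using hw)]
      _ = ∫ p in polarCoord.target, p.1 •
            (ball (0:ℂ) R).indicator (fun w => ‖f (c + w)‖) (Complex.polarCoord.symm p) :=
          (Complex.integral_comp_polarCoord_symm _).symm
      _ = ∫ p in polarCoord.target, (Ioo 0 R ×ˢ Ioo (-π) π).indicator G p := by
          apply setIntegral_congr_fun (polarCoord.open_target.measurableSet)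
          intro p hp
          rw [polarCoord_target] at hp
          obtain ⟨hp1, hp2⟩ := hp
          have habs : ‖Complex.polarCoord.symm p‖ = p.1 := by
            rw [Complex.norm_polarCoord_symm, abs_of_pos hp1]
          dsimp only
          by_cases hpR : p.1 < R
          · rw [indicator_of_mem (show Complex.polarCoord.symm p ∈ ball (0:ℂ) R by
              rw [mem_ball_zero_iff, habs]; exact hpR), indicator_of_mem (show p ∈ Ioo (0:ℝ) R ×ˢ Ioo (-π) π from ⟨⟨hp1, hpR⟩, hp2⟩)]
            rw [hsymm p, smul_eq_mul]
          · rw [indicator_of_notMem (show Complex.polarCoord.symm p ∉ ball (0:ℂ) R by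
              rw [mem_ball_zero_iff, habs]; exact hpR), indicator_of_notMem (by
              intro hmem
              exact hpR hmem.1.2), smul_zero]
      _ = ∫ p in polarCoord.target ∩ Ioo 0 R ×ˢ Ioo (-π) π, G p := by
          rw [setIntegral_indicator ((measurableSet_Ioo).prod (measurableSet_Ioo))]
      _ = ∫ p in Ioo 0 R ×ˢ Ioo (-π) π, G p := by
          rw [inter_eq_self_of_subset_right]
          rw [polarCoord_target]
          exact prod_mono Ioo_subset_Ioi_self subset_rfl
  have hGint' : Integrable G ((volume.restrict (Ioo 0 R)).prod (volume.restrict (Ioo (-π) π))) := by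
    rw [Measure.prod_restrict]
    rw [Measure.volume_eq_prod] at hGint
    exact hGint
  have key2 : ∫ p in Ioo 0 R ×ˢ Ioo (-π) π, G p
      = ∫ ρ in Ioo 0 R, ∫ θ in Ioo (-π) π, G (ρ, θ) := by
    rw [Measure.volume_eq_prod]
    exact setIntegral_prod G (by rwa [Measure.volume_eq_prod] at hGint)
  have hlow : ∀ ρ ∈ Ioo (0:ℝ) R, ρ * (2 * π * ‖f c‖) ≤ ∫ θ in Ioo (-π) π, G (ρ, θ) := by
    intro ρ hρ
    have h := my_circle_mean_norm_le hρ.1 (hf.mono (closedBall_subset_closedBall hρ.2.le))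
    have heq : ∫ θ in Ioo (-π) π, G (ρ, θ)
        = ρ * ∫ θ in Ioo (-π) π, ‖f (circleMap c ρ θ)‖ := by
      simp only [hGdef]
      exact integral_const_mul ρ _
    rw [heq]
    exact mul_le_mul_of_nonneg_left h hρ.1.le
  have hleft : IntegrableOn (fun ρ : ℝ => ρ * (2 * π * ‖f c‖)) (Ioo 0 R) :=
    ((continuous_id.mul continuous_const).integrableOn_Icc (a := 0) (b := R)).mono_set
      Ioo_subset_Icc_self
  have hright : IntegrableOn (fun ρ => ∫ θ in Ioo (-π) π, G (ρ, θ)) (Ioo 0 R) :=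
    hGint'.integral_prod_left
  have hval : ∫ ρ in Ioo (0:ℝ) R, ρ * (2 * π * ‖f c‖) = π * R ^ 2 * ‖f c‖ := by
    rw [integral_mul_const]
    have hid : ∫ ρ in Ioo (0:ℝ) R, ρ = R ^ 2 / 2 := by
      rw [← MeasureTheory.integral_Ioc_eq_integral_Ioo,
        ← intervalIntegral.integral_of_le hR.le, integral_id]
      ring
    rw [hid]
    ring
  calc π * R ^ 2 * ‖f c‖ = ∫ ρ in Ioo (0:ℝ) R, ρ * (2 * π * ‖f c‖) := hval.symm
    _ ≤ ∫ ρ in Ioo (0:ℝ) R, ∫ θ in Ioo (-π) π, G (ρ, θ) :=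
        setIntegral_mono_on hleft hright measurableSet_Ioo hlow
    _ = ∫ w in ball c R, ‖f w‖ := by rw [← key2, ← key]

lemma my_norm_le_of_energy {E : Type*} [NormedAddCommGroup E] [NormedSpace ℂ E] [CompleteSpace E]
    {f : ℂ → E} {c : ℂ} {R ε : ℝ} (hR : 0 < R) (hε : 0 ≤ ε)
    (hf : DifferentiableOn ℂ f (closedBall c R))
    (hE : ∫ w in ball c R, ‖f w‖ ^ 2 ≤ ε ^ 2) :
    ‖f c‖ ≤ ε / (Real.sqrt π * R) := by
  set μ := volume.restrict (ball c R) with hμ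
  haveI : IsFiniteMeasure μ := ⟨by
    rw [hμ, Measure.restrict_apply_univ]
    exact measure_ball_lt_top⟩
  obtain ⟨C, hC⟩ := (isCompact_closedBall c R).exists_bound_of_continuousOn hf.continuousOn
  have hmeas : AEStronglyMeasurable (fun w => ‖f w‖) μ :=
    (hf.continuousOn.mono ball_subset_closedBall).norm.aestronglyMeasurable measurableSet_ball
  have hmem : MemLp (fun w => ‖f w‖) (ENNReal.ofReal 2) μ := by
    refine MemLp.of_bound hmeas C ?_
    refine (ae_restrict_iff' measurableSet_ball).2 (ae_of_all _ fun w hw => ?_)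
    simpa using hC w (ball_subset_closedBall hw)
  have hone : MemLp (fun _ : ℂ => (1:ℝ)) (ENNReal.ofReal 2) μ := memLp_const 1
  have hCS := integral_mul_le_Lp_mul_Lq_of_nonneg (μ := μ)
    (Real.HolderConjugate.two_two)
    (ae_of_all _ fun w => norm_nonneg (f w)) (ae_of_all _ fun _ => zero_le_one) hmem hone
  simp only [mul_one, Real.rpow_two] at hCS
  have hμball : (μ univ).toReal = π * R ^ 2 := by
    rw [hμ, Measure.restrict_apply_univ, Complex.volume_ball]
    rw [ENNReal.toReal_mul, ENNReal.toReal_pow, ENNReal.toReal_ofReal hR.le]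
    simp [mul_comm]
  have h3 : (∫ _ : ℂ, (1:ℝ) ^ 2 ∂μ) = π * R ^ 2 := by
    norm_num [integral_const, measureReal_def, hμball]
  rw [h3] at hCS
  have hCS' : ∫ w, ‖f w‖ ∂μ ≤ (∫ w, ‖f w‖ ^ 2 ∂μ) ^ (1/2 : ℝ) * (π * R ^ 2) ^ (1/2 : ℝ) := hCS
  have hbase : π * R ^ 2 * ‖f c‖ ≤ ∫ w, ‖f w‖ ∂μ := my_mean_le_integral hR hf
  have hint_nonneg : 0 ≤ ∫ w, ‖f w‖ ^ 2 ∂μ := integral_nonneg fun w => sq_nonneg _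
  have h1 : (∫ w, ‖f w‖ ^ 2 ∂μ) ^ (1/2 : ℝ) ≤ ε := by
    calc (∫ w, ‖f w‖ ^ 2 ∂μ) ^ (1/2 : ℝ) ≤ (ε ^ 2) ^ (1/2 : ℝ) :=
          Real.rpow_le_rpow hint_nonneg hE (by norm_num)
      _ = ε := by
          rw [← Real.rpow_two, ← Real.rpow_mul hε]
          norm_num
  have h2 : (π * R ^ 2) ^ (1/2 : ℝ) = Real.sqrt π * R := by
    rw [Real.mul_rpow pi_pos.le (sq_nonneg R), Real.sqrt_eq_rpow]
    congr 1
    rw [← Real.rpow_two, ← Real.rpow_mul hR.le]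
    norm_num
  have hπR : 0 < Real.sqrt π * R := by positivity
  rw [le_div_iff₀ hπR]
  have hchain : π * R ^ 2 * ‖f c‖ ≤ ε * (Real.sqrt π * R) := by
    calc π * R ^ 2 * ‖f c‖ ≤ ∫ w, ‖f w‖ ∂μ := hbase
      _ ≤ (∫ w, ‖f w‖ ^ 2 ∂μ) ^ (1/2 : ℝ) * (π * R ^ 2) ^ (1/2 : ℝ) := hCS'
      _ ≤ ε * (Real.sqrt π * R) := by
          rw [h2]
          exact mul_le_mul_of_nonneg_right h1 hπR.le
  have hsq : Real.sqrt π * Real.sqrt π = π := Real.mul_self_sqrt pi_pos.le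
  have hid : ‖f c‖ * (Real.sqrt π * R) * (Real.sqrt π * R) = π * R ^ 2 * ‖f c‖ := by
    linear_combination (R ^ 2 * ‖f c‖) * hsq
  exact le_of_mul_le_mul_right (by rw [hid]; exact hchain) hπR

set_option maxHeartbeats 1600000 in
/-- Removal of interior singularities for finite-energy holomorphic maps
(flat-target case of Theorem 3.7, case (symp, interior)): a holomorphic map
on the punctured open unit disc with finite energy extends holomorphically
over the puncture. -/
theorem removable_singularity_interior (n : ℕ) (hn : 1 ≤ n)
    (u : ℂ → EuclideanSpace ℂ (Fin n))
    (hhol : DifferentiableOn ℂ u (ball (0 : ℂ) 1 \ {0}))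
    (henergy : IntegrableOn (fun z => ‖deriv u z‖ ^ 2) (ball (0 : ℂ) 1 \ {0})) :
    ∃ v : ℂ → EuclideanSpace ℂ (Fin n),
      DifferentiableOn ℂ v (ball (0 : ℂ) 1) ∧
      ∀ z ∈ ball (0 : ℂ) 1 \ {0}, v z = u z := by
  set D : Set ℂ := ball (0 : ℂ) 1 \ {0} with hDdef
  have hD : IsOpen D := isOpen_ball.sdiff isClosed_singleton
  have hg : DifferentiableOn ℂ (deriv u) D := ((hhol.analyticOnNhd hD).deriv).differentiableOn
  set F : ℂ → ℝ := fun z => ‖deriv u z‖ ^ 2 with hFdef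
  -- tail smallness of the energy
  have tail : ∀ ε : ℝ, 0 < ε → ∃ δ : ℝ, 0 < δ ∧ δ < 1 ∧ ∫ z in ball (0:ℂ) δ \ {0}, F z < ε := by
    intro ε hε
    set s : ℕ → Set ℂ := fun k => ball (0:ℂ) (1/((k:ℝ)+2)) \ {0} with hsdef
    have hsm : ∀ k, MeasurableSet (s k) := fun k =>
      measurableSet_ball.diff (measurableSet_singleton 0)
    have hrk1 : ∀ k : ℕ, 1/((k:ℝ)+2) ≤ 1 := by
      intro k
      rw [div_le_one (by positivity)]
      have : (0:ℝ) ≤ (k:ℝ) := Nat.cast_nonneg k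
      linarith
    have hsub : ∀ k, s k ⊆ D := fun k z hz => ⟨ball_subset_ball (hrk1 k) hz.1, hz.2⟩
    have hbd : Integrable (D.indicator F) := henergy.integrable_indicator hD.measurableSet
    have hk : ∀ k, Integrable ((s k).indicator F) := fun k =>
      (henergy.mono_set (hsub k)).integrable_indicator (hsm k)
    have hten : Filter.Tendsto (fun k => ∫ z, (s k).indicator F z) Filter.atTop (nhds 0) := by
      have h0 : (0:ℝ) = ∫ _ : ℂ, (0:ℝ) := by simp
      rw [h0]
      apply tendsto_integral_of_dominated_convergence (D.indicator F)
        (fun k => (hk k).aestronglyMeasurable) hbd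
      · intro k
        apply ae_of_all
        intro z
        rw [Real.norm_eq_abs, abs_of_nonneg (indicator_nonneg (fun x _ => sq_nonneg _) z)]
        exact indicator_le_indicator_of_subset (hsub k) (fun x => sq_nonneg _) z
      · apply ae_of_all
        intro z
        by_cases hz : z = 0
        · have hzero : ∀ k, (s k).indicator F z = 0 := fun k =>
            indicator_of_notMem (fun h => h.2 (by simp [hz])) F
          simp only [hzero]
          exact tendsto_const_nhds
        · have hznorm : 0 < ‖z‖ := norm_pos_iff.2 hz
          obtain ⟨K, hK⟩ := exists_nat_gt (1/‖z‖)
          have hev : ∀ᶠ k in Filter.atTop, (s k).indicator F z = 0 := by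
            filter_upwards [Filter.eventually_ge_atTop K] with k hkK
            apply indicator_of_notMem
            intro hmem
            have h1 : ‖z‖ < 1/((k:ℝ)+2) := mem_ball_zero_iff.1 hmem.1
            have h2 : (K:ℝ) ≤ (k:ℝ) := Nat.cast_le.2 hkK
            have h3 : 1 < ‖z‖ * (K:ℝ) := by
              rw [div_lt_iff₀ hznorm] at hK
              linarith
            have h4 : ‖z‖ * (K:ℝ) ≤ ‖z‖ * ((k:ℝ)+2) :=
              mul_le_mul_of_nonneg_left (by linarith) (norm_nonneg z)
            rw [lt_div_iff₀ (by positivity)] at h1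
            nlinarith
          exact (Filter.tendsto_congr' hev).2 tendsto_const_nhds
    have hlt : ∀ᶠ k in Filter.atTop, (∫ z, (s k).indicator F z) < ε :=
      hten.eventually_lt_const hε
    obtain ⟨K, hKlt⟩ := hlt.exists
    refine ⟨1/((K:ℝ)+2), by positivity, ?_, ?_⟩
    · rw [div_lt_one (by positivity)]
      have : (0:ℝ) ≤ (K:ℝ) := Nat.cast_nonneg K
      linarith
    · rwa [← integral_indicator (hsm K)]
  -- pointwise derivative bound
  have hptw : ∀ ε : ℝ, 0 < ε → ∃ r : ℝ, 0 < r ∧ r < 1/2 ∧ ∀ z : ℂ, z ≠ 0 → ‖z‖ ≤ r →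
      ‖deriv u z‖ ≤ (2 * ε / Real.sqrt π) / ‖z‖ := by
    intro ε hε
    obtain ⟨δ, hδ0, hδ1, hδε⟩ := tail (ε^2) (by positivity)
    refine ⟨δ/2, by positivity, by linarith, ?_⟩
    intro z hz0 hzr
    have hz : 0 < ‖z‖ := norm_pos_iff.2 hz0
    have hR : 0 < ‖z‖/2 := by positivity
    have hsubball : closedBall z (‖z‖/2) ⊆ ball (0:ℂ) δ \ {0} := by
      intro w hw
      rw [mem_closedBall, dist_eq_norm] at hw
      have hwn : ‖w‖ ≤ (3/2) * ‖z‖ := by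
        calc ‖w‖ = ‖z + (w - z)‖ := by ring_nf
          _ ≤ ‖z‖ + ‖w - z‖ := norm_add_le _ _
          _ ≤ (3/2) * ‖z‖ := by linarith
      have hwl : ‖z‖/2 ≤ ‖w‖ := by
        have : ‖z‖ - ‖w‖ ≤ ‖w - z‖ := by
          calc ‖z‖ - ‖w‖ ≤ ‖z - w‖ := norm_sub_norm_le _ _
            _ = ‖w - z‖ := norm_sub_rev _ _
        linarith
      constructor
      · rw [mem_ball_zero_iff]
        calc ‖w‖ ≤ (3/2) * ‖z‖ := hwn
          _ ≤ (3/2) * (δ/2) := by linarith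
          _ < δ := by linarith
      · intro hw0
        rw [mem_singleton_iff] at hw0
        rw [hw0, norm_zero] at hwl
        linarith
    have hsubD : closedBall z (‖z‖/2) ⊆ D := fun w hw =>
      ⟨ball_subset_ball hδ1.le (hsubball hw).1, (hsubball hw).2⟩
    have hfd : DifferentiableOn ℂ (deriv u) (closedBall z (‖z‖/2)) := hg.mono hsubD
    have hEb : ∫ w in ball z (‖z‖/2), ‖deriv u w‖ ^ 2 ≤ ε ^ 2 := by
      have hsub' : ball (0:ℂ) δ \ {0} ⊆ D := fun w hw =>
        ⟨ball_subset_ball hδ1.le hw.1, hw.2⟩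
      have hmono : ∫ w in ball z (‖z‖/2), F w ≤ ∫ w in ball (0:ℂ) δ \ {0}, F w :=
        setIntegral_mono_set (henergy.mono_set hsub')
          (ae_of_all _ fun w => sq_nonneg _)
          ((ball_subset_closedBall.trans hsubball).eventuallyLE)
      exact le_trans hmono hδε.le
    have hb := my_norm_le_of_energy hR hε.le hfd hEb
    calc ‖deriv u z‖ ≤ ε / (Real.sqrt π * (‖z‖/2)) := hb
      _ = (2 * ε / Real.sqrt π) / ‖z‖ := by
          have hs : Real.sqrt π ≠ 0 := ne_of_gt (Real.sqrt_pos.2 pi_pos)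
          field_simp
  -- the little-o condition
  have ho : (fun z => u z - u 0) =o[nhdsWithin (0:ℂ) {(0:ℂ)}ᶜ] fun z : ℂ => (z - 0)⁻¹ := by
    rw [Asymptotics.isLittleO_iff]
    intro C hC
    have hε : 0 < Real.sqrt π * C / 8 := by positivity
    obtain ⟨r, hr0, hr2, hbnd⟩ := hptw _ hε
    have hs : Real.sqrt π ≠ 0 := ne_of_gt (Real.sqrt_pos.2 pi_pos)
    have hconst : 2 * (Real.sqrt π * C / 8) / Real.sqrt π = C / 4 := by
      field_simp
      ring
    have hsph : sphere (0:ℂ) r ⊆ D := by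
      intro w hw
      rw [mem_sphere_zero_iff_norm] at hw
      refine ⟨mem_ball_zero_iff.2 (by rw [hw]; linarith), ?_⟩
      intro h0
      rw [mem_singleton_iff] at h0
      rw [h0, norm_zero] at hw
      linarith
    obtain ⟨B, hB⟩ := (isCompact_sphere (0:ℂ) r).exists_bound_of_continuousOn
      (hhol.continuousOn.mono hsph)
    have hB0 : 0 ≤ B := by
      have hmem : ((r:ℝ):ℂ) ∈ sphere (0:ℂ) r := by
        rw [mem_sphere_zero_iff_norm, Complex.norm_real, Real.norm_eq_abs, abs_of_pos hr0]
      exact le_trans (norm_nonneg _) (hB _ hmem)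
    set M : ℝ := B + ‖u 0‖ with hMdef
    have hM0 : 0 ≤ M := add_nonneg hB0 (norm_nonneg _)
    have hm0 : 0 < min r (C/(4*(M+1))) := lt_min hr0 (by positivity)
    filter_upwards [mem_nhdsWithin_of_mem_nhds (ball_mem_nhds (0:ℂ) hm0),
      self_mem_nhdsWithin] with z hzball hz0
    have hz0' : z ≠ 0 := hz0
    have hz : 0 < ‖z‖ := norm_pos_iff.2 hz0'
    have hzr : ‖z‖ < r := lt_of_lt_of_le (mem_ball_zero_iff.1 hzball) (min_le_left _ _)
    have hzC : ‖z‖ < C/(4*(M+1)) := lt_of_lt_of_le (mem_ball_zero_iff.1 hzball) (min_le_right _ _)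
    set cfac : ℝ := r / ‖z‖ with hcdef
    have hc1 : 1 ≤ cfac := (one_le_div hz).2 hzr.le
    set w : ℂ := ((cfac:ℝ):ℂ) * z with hwdef
    have hwnorm : ‖w‖ = r := by
      rw [hwdef, norm_mul, Complex.norm_real, Real.norm_eq_abs,
        abs_of_pos (lt_of_lt_of_le one_pos hc1), hcdef]
      exact div_mul_cancel₀ r (ne_of_gt hz)
    -- segment facts
    have hseg : ∀ x ∈ segment ℝ z w, ‖z‖ ≤ ‖x‖ ∧ ‖x‖ ≤ r := by
      rintro x ⟨a, b, ha, hb, hab, rfl⟩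
      have hx' : a • z + b • w = (((a + b * cfac : ℝ)):ℂ) * z := by
        rw [hwdef]
        push_cast
        simp only [Complex.real_smul]
        ring
      have hbb : b ≤ b * cfac := le_mul_of_one_le_right hb hc1
      have haa : a ≤ a * cfac := le_mul_of_one_le_right ha hc1
      have habc : a * cfac + b * cfac = cfac := by rw [← add_mul, hab, one_mul]
      have hs1 : 1 ≤ a + b * cfac := by linarith
      have hs2 : a + b * cfac ≤ cfac := by linarith
      rw [hx', norm_mul, Complex.norm_real, Real.norm_eq_abs,
        abs_of_nonneg (by linarith : (0:ℝ) ≤ a + b * cfac)]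
      constructor
      · exact le_mul_of_one_le_left (norm_nonneg z) hs1
      · have h5 : (a + b * cfac) * ‖z‖ ≤ cfac * ‖z‖ :=
          mul_le_mul_of_nonneg_right hs2 (norm_nonneg z)
        have h6 : cfac * ‖z‖ = r := by
          rw [hcdef]; exact div_mul_cancel₀ r (ne_of_gt hz)
        linarith
    have hsegD : segment ℝ z w ⊆ D := by
      intro x hx
      obtain ⟨hx1, hx2⟩ := hseg x hx
      refine ⟨mem_ball_zero_iff.2 (by linarith), ?_⟩
      intro h0
      rw [mem_singleton_iff] at h0
      rw [h0, norm_zero] at hx1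
      linarith
    have hder : ∀ x ∈ segment ℝ z w, DifferentiableAt ℂ u x := fun x hx =>
      hhol.differentiableAt (hD.mem_nhds (hsegD hx))
    have hbound : ∀ x ∈ segment ℝ z w, ‖deriv u x‖ ≤ (C/4) / ‖z‖ := by
      intro x hx
      obtain ⟨hx1, hx2⟩ := hseg x hx
      have hx0 : x ≠ 0 := by
        intro h0
        rw [h0, norm_zero] at hx1
        linarith
      have h := hbnd x hx0 hx2
      rw [hconst] at h
      calc ‖deriv u x‖ ≤ (C/4) / ‖x‖ := h
        _ ≤ (C/4) / ‖z‖ := by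
            apply div_le_div_of_nonneg_left (by linarith) hz hx1
    have hMVT := Convex.norm_image_sub_le_of_norm_deriv_le hder hbound (convex_segment z w)
      (left_mem_segment ℝ z w) (right_mem_segment ℝ z w)
    have hwz : ‖w - z‖ ≤ r := by
      have hwz' : w - z = (((cfac - 1 : ℝ)):ℂ) * z := by
        rw [hwdef]; push_cast; ring
      rw [hwz', norm_mul, Complex.norm_real, Real.norm_eq_abs,
        abs_of_nonneg (by linarith : (0:ℝ) ≤ cfac - 1)]
      have : (cfac - 1) * ‖z‖ = r - ‖z‖ := by
        rw [hcdef, sub_mul, one_mul, div_mul_cancel₀ r (ne_of_gt hz)]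
      rw [this]; linarith
    have hsphw : ‖u w‖ ≤ B := hB w (by rw [mem_sphere_zero_iff_norm]; exact hwnorm)
    -- conclude
    rw [sub_zero, norm_inv, ← div_eq_mul_inv, le_div_iff₀ hz]
    have h1 : ‖u z - u 0‖ ≤ ‖u w - u z‖ + ‖u w‖ + ‖u 0‖ := by
      calc ‖u z - u 0‖ = ‖(u w - u 0) - (u w - u z)‖ := by congr 1; abel
        _ ≤ ‖u w - u 0‖ + ‖u w - u z‖ := norm_sub_le _ _
        _ ≤ (‖u w‖ + ‖u 0‖) + ‖u w - u z‖ := by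
            have := norm_sub_le (u w) (u 0)
            linarith
        _ = ‖u w - u z‖ + ‖u w‖ + ‖u 0‖ := by ring
    have h2 : ‖u w - u z‖ * ‖z‖ ≤ (C/4) := by
      have := mul_le_mul_of_nonneg_right hMVT hz.le
      calc ‖u w - u z‖ * ‖z‖ ≤ (C/4) / ‖z‖ * ‖w - z‖ * ‖z‖ := this
        _ = (C/4) * ‖w - z‖ := by
            have hq : C / 4 / ‖z‖ * ‖w - z‖ * ‖z‖ = C / 4 * ‖w - z‖ * (‖z‖ / ‖z‖) := by
              ring
            rw [hq, div_self (ne_of_gt hz), mul_one]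
        _ ≤ (C/4) * 1 := by
            apply mul_le_mul_of_nonneg_left _ (by linarith)
            linarith
        _ = C/4 := mul_one _
    have h3 : (‖u w‖ + ‖u 0‖) * ‖z‖ ≤ C/4 := by
      have hMz : M * ‖z‖ ≤ C/4 := by
        have := mul_le_mul_of_nonneg_left hzC.le hM0
        calc M * ‖z‖ ≤ M * (C/(4*(M+1))) := this
          _ ≤ C/4 := by
              rw [mul_comm, div_mul_eq_mul_div, div_le_div_iff₀ (by positivity) (by norm_num)]
              nlinarith
      calc (‖u w‖ + ‖u 0‖) * ‖z‖ ≤ M * ‖z‖ := by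
            apply mul_le_mul_of_nonneg_right _ hz.le
            rw [hMdef]; linarith
        _ ≤ C/4 := hMz
    calc ‖u z - u 0‖ * ‖z‖ ≤ (‖u w - u z‖ + ‖u w‖ + ‖u 0‖) * ‖z‖ :=
          mul_le_mul_of_nonneg_right h1 hz.le
      _ = ‖u w - u z‖ * ‖z‖ + (‖u w‖ + ‖u 0‖) * ‖z‖ := by ring
      _ ≤ C/4 + C/4 := add_le_add h2 h3
      _ ≤ C := by linarith
  have hmem : ball (0:ℂ) 1 ∈ nhds (0:ℂ) := isOpen_ball.mem_nhds (mem_ball_self one_pos)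
  have hv := Complex.differentiableOn_update_limUnder_of_isLittleO hmem hhol ho
  refine ⟨Function.update u 0 (limUnder (nhdsWithin (0:ℂ) {(0:ℂ)}ᶜ) u), hv, ?_⟩
  intro z hz
  exact Function.update_of_ne hz.2 _ _
end

section
/- Energy density estimates for holomorphic maps with straight Lagrangian boundary conditions (the flat-target case of Lemma 6.2, case (symp)): Let n ≥ 1, let Ω ⊆ ℍ² be relatively open in the closed half plane, and let u : Ω → ℂⁿ be C² up to the boundary and holomorphic on Ω ∩ {t > 0}, with u(s,0) ∈ ℝⁿ whenever (s,0) ∈ Ω. Then the energy density e := ‖∂_s u‖² satisfies Δe = 4·‖∂_s² u‖² ≥ 0 on Ω ∩ {t > 0} (so −Δe ≤ 0, i.e. e is subharmonic in the geometers' convention), and the normal derivative vanishes along the boundary: (∂e/∂t)(s,0) = 0 at every boundary point (s,0) ∈ Ω. -/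
/-- The (analysts') Laplacian of a real-valued function on `ℂ ≅ ℝ²`:
`Δf = ∂²f/∂s² + ∂²f/∂t²`, where `s` is the direction `1` and `t` the
direction `I`. -/
noncomputable def lapC (f : ℂ → ℝ) (z : ℂ) : ℝ :=
  iteratedFDeriv ℝ 2 f z (fun _ => (1 : ℂ)) +
    iteratedFDeriv ℝ 2 f z (fun _ => Complex.I)

section EnergyDensityAux

open Complex Filter

local notation "⟪" x ", " y "⟫" => @inner ℂ _ _ x y

variable {n : ℕ}

lemma normSq_hasFDerivAt {F : ℂ → EuclideanSpace ℂ (Fin n)}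
    {F' : ℂ →L[ℝ] EuclideanSpace ℂ (Fin n)} {x : ℂ} (hF : HasFDerivAt F F' x) :
    HasFDerivAt (fun w => ‖F w‖ ^ 2)
      (Complex.reCLM.comp ((fderivInnerCLM ℂ (F x, F x)).comp (F'.prod F'))) x := by
  have h := hF.inner ℂ hF
  have h2 := Complex.reCLM.hasFDerivAt.comp x h
  have : (fun w => ‖F w‖ ^ 2) = fun w => Complex.reCLM ⟪F w, F w⟫ := by
    funext w
    have := inner_self_eq_norm_sq (𝕜 := ℂ) (F w)
    simpa [RCLike.re_to_complex] using this.symm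
  rw [this]
  exact h2

lemma normSq_fderiv_apply {F : ℂ → EuclideanSpace ℂ (Fin n)}
    {F' : ℂ →L[ℝ] EuclideanSpace ℂ (Fin n)} {x : ℂ} (hF : HasFDerivAt F F' x) (v : ℂ) :
    fderiv ℝ (fun w => ‖F w‖ ^ 2) x v = 2 * (⟪F x, F' v⟫).re := by
  rw [(normSq_hasFDerivAt hF).fderiv]
  have : (⟪F' v, F x⟫) = starRingEnd ℂ ⟪F x, F' v⟫ := (inner_conj_symm _ _).symm
  simp only [ContinuousLinearMap.comp_apply, ContinuousLinearMap.prod_apply, fderivInnerCLM_apply,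
    this, Complex.reCLM_apply, Complex.add_re, Complex.conj_re]
  ring

lemma fderiv_one_eq_zero_of_eventually_zero {X : Type*} [NormedAddCommGroup X]
    [NormedSpace ℝ X] {h : ℂ → X} {s : ℝ} (hd : DifferentiableAt ℝ h (s : ℂ))
    (h0 : ∀ᶠ x : ℝ in nhds s, h (x : ℂ) = 0) :
    fderiv ℝ h (s : ℂ) 1 = 0 := by
  have hcomp : HasFDerivAt (fun x : ℝ => h (x : ℂ))
      ((fderiv ℝ h (s : ℂ)).comp Complex.ofRealCLM) s :=
    hd.hasFDerivAt.comp s Complex.ofRealCLM.hasFDerivAt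
  have hz : fderiv ℝ (fun x : ℝ => h (x : ℂ)) s = 0 := by
    have : (fun x : ℝ => h (x : ℂ)) =ᶠ[nhds s] fun _ => (0 : X) := h0
    rw [this.fderiv_eq, fderiv_fun_const]
    rfl
  have := hcomp.fderiv
  rw [hz] at this
  have happ := congrArg (fun L : ℝ →L[ℝ] X => L 1) this
  simpa using happ.symm

lemma eval_lemma {n : ℕ} (a b c d : EuclideanSpace ℂ (Fin n)) (v : ℂ) :
    ((2 : ℝ) • Complex.reCLM.comp (v • ((fderivInnerCLM ℂ (a, b)).comp
      ((((1 : ℂ →L[ℂ] ℂ).smulRight c).restrictScalars ℝ).prod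
       (((1 : ℂ →L[ℂ] ℂ).smulRight d).restrictScalars ℝ))))) v
      = 2 * (v * (v * ⟪a, d⟫ + (starRingEnd ℂ v) * ⟪c, b⟫)).re := by
  simp only [ContinuousLinearMap.smul_apply, ContinuousLinearMap.coe_smul', Pi.smul_apply,
    ContinuousLinearMap.coe_comp', Function.comp_apply, ContinuousLinearMap.prod_apply,
    ContinuousLinearMap.coe_restrictScalars', ContinuousLinearMap.smulRight_apply,
    ContinuousLinearMap.one_apply, fderivInnerCLM_apply, inner_smul_right, inner_smul_left,
    smul_eq_mul, Complex.reCLM_apply]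

set_option maxHeartbeats 2000000 in
/-- Energy density estimates for holomorphic maps with straight Lagrangian
boundary conditions (flat-target case of Lemma 6.2, case (symp)): on a
relatively open subset `Ω = V ∩ ℍ²` of the closed half plane, for a map `u`
which is `C²` up to the boundary, holomorphic in the interior, and with real
boundary values, the energy density `e = ‖∂ₛu‖²` satisfies `Δe = 4‖∂ₛ²u‖² ≥ 0`
in the interior and `∂e/∂t = 0` on the boundary. -/
theorem energy_density_straight_lagrangian (n : ℕ) (hn : 1 ≤ n)
    (Ω V : Set ℂ) (hV : IsOpen V) (hΩ : Ω = V ∩ {z : ℂ | 0 ≤ z.im})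
    (u : ℂ → EuclideanSpace ℂ (Fin n))
    (U : Set ℂ) (hU : IsOpen U) (hΩU : Ω ⊆ U) (hC2 : ContDiffOn ℝ 2 u U)
    (hhol : DifferentiableOn ℂ u (Ω ∩ {z : ℂ | 0 < z.im}))
    (hbdry : ∀ s : ℝ, (s : ℂ) ∈ Ω → ∀ j, (u (s : ℂ) j).im = 0) :
    (∀ z ∈ Ω ∩ {z : ℂ | 0 < z.im},
      lapC (fun w => ‖fderiv ℝ u w 1‖ ^ 2) z
          = 4 * ‖fderiv ℝ (fun w => fderiv ℝ u w 1) z 1‖ ^ 2 ∧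
        0 ≤ lapC (fun w => ‖fderiv ℝ u w 1‖ ^ 2) z) ∧
    (∀ s : ℝ, (s : ℂ) ∈ Ω →
      fderiv ℝ (fun w => ‖fderiv ℝ u w 1‖ ^ 2) (s : ℂ) Complex.I = 0) := by
  -- common setup
  set W : Set ℂ := V ∩ {z : ℂ | 0 < z.im} with hW
  have hWopen : IsOpen W := hV.inter (isOpen_lt continuous_const Complex.continuous_im)
  have hWΩ : Ω ∩ {z : ℂ | 0 < z.im} = W := by
    rw [hΩ]
    ext z
    simp only [Set.mem_inter_iff, Set.mem_setOf_eq, hW]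
    constructor
    · rintro ⟨⟨h1, _⟩, h3⟩; exact ⟨h1, h3⟩
    · rintro ⟨h1, h3⟩; exact ⟨⟨h1, le_of_lt h3⟩, h3⟩
  have hWsubΩ : W ⊆ Ω := by
    rw [hΩ]
    rintro z ⟨h1, h2⟩
    exact ⟨h1, show (0:ℝ) ≤ z.im from le_of_lt (show (0:ℝ) < z.im from h2)⟩
  have hholW : DifferentiableOn ℂ u W := by rw [← hWΩ]; exact hhol
  -- F is the s-derivative; it is C¹ on U
  set F : ℂ → EuclideanSpace ℂ (Fin n) := fun w => fderiv ℝ u w 1 with hFdef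
  have hfd1 : ContDiffOn ℝ 1 (fderiv ℝ u) U := hC2.fderiv_of_isOpen hU le_rfl
  have hFC1 : ContDiffOn ℝ 1 F U := hfd1.clm_apply contDiffOn_const
  have hFdiff : ∀ w ∈ U, DifferentiableAt ℝ F w := fun w hw =>
    (hFC1.differentiableOn one_ne_zero).differentiableAt (hU.mem_nhds hw)
  -- Cauchy–Riemann on all of Ω
  have hCRW : ∀ w ∈ W, fderiv ℝ u w Complex.I = Complex.I • fderiv ℝ u w 1 := by
    intro w hw
    have hd : DifferentiableAt ℂ u w := hholW.differentiableAt (hWopen.mem_nhds hw)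
    rw [hd.fderiv_restrictScalars ℝ]
    simp only [ContinuousLinearMap.coe_restrictScalars']
    have h2 := (fderiv ℂ u w).map_smul Complex.I (1 : ℂ)
    simpa using h2
  have hCR : ∀ w ∈ Ω, fderiv ℝ u w Complex.I = Complex.I • fderiv ℝ u w 1 := by
    intro w hw
    have h0le : (0 : ℝ) ≤ w.im := (hΩ ▸ hw).2
    rcases lt_or_eq_of_le h0le with him | him
    · exact hCRW w ⟨(hΩ ▸ hw).1, him⟩
    · -- boundary point: use continuity and density of W
      have hwV : w ∈ V := (hΩ ▸ hw).1
      have hwU : w ∈ U := hΩU hw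
      set Hf : ℂ → EuclideanSpace ℂ (Fin n) :=
        fun y => fderiv ℝ u y Complex.I - Complex.I • fderiv ℝ u y 1 with hHf
      have hHcont : ContinuousOn Hf U := by
        apply ContinuousOn.sub
        · exact (hfd1.continuousOn).clm_apply continuousOn_const
        · exact ((hfd1.continuousOn).clm_apply continuousOn_const).const_smul Complex.I
      have hH0 : ∀ y ∈ W, Hf y = 0 := by
        intro y hy; simp [hHf, hCRW y hy]
      have hclos : w ∈ closure W := by
        rw [Metric.mem_closure_iff]
        intro ε hε
        rcases Metric.isOpen_iff.1 hV w hwV with ⟨δ, hδ, hball⟩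
        set r := min ε δ / 2 with hr
        have hrpos : 0 < r := by positivity
        have hrδ : r < δ := by
          rw [hr]
          have : min ε δ ≤ δ := min_le_right _ _
          have hm : 0 < min ε δ := lt_min hε hδ
          linarith
        have hrε : r < ε := by
          rw [hr]
          have : min ε δ ≤ ε := min_le_left _ _
          have hm : 0 < min ε δ := lt_min hε hδ
          linarith
        have hnrm : ‖r • Complex.I‖ = r := by
          rw [norm_smul]
          simp [Real.norm_eq_abs, abs_of_pos hrpos]
        refine ⟨w + r • Complex.I, ⟨hball ?_, ?_⟩, ?_⟩
        · simp only [Metric.mem_ball]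
          rw [dist_comm, dist_self_add_right, hnrm]; exact hrδ
        · show (0 : ℝ) < (w + r • Complex.I).im
          have : (w + r • Complex.I).im = w.im + r := by
            simp [Complex.add_im, Complex.smul_im]
          rw [this, ← him]
          simpa using hrpos
        · rw [dist_self_add_right, hnrm]
          exact hrε
      have hne : (nhdsWithin w W).NeBot := mem_closure_iff_nhdsWithin_neBot.1 hclos
      have ht1 : Tendsto Hf (nhdsWithin w W) (nhds (Hf w)) :=
        ((hHcont.continuousAt (hU.mem_nhds hwU)).continuousWithinAt)
      have ht2 : Tendsto Hf (nhdsWithin w W) (nhds 0) := by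
        refine Tendsto.congr' ?_ tendsto_const_nhds
        filter_upwards [self_mem_nhdsWithin] with y hy
        exact (hH0 y hy).symm
      have : Hf w = 0 := tendsto_nhds_unique ht1 ht2
      exact sub_eq_zero.1 this
  refine ⟨?_, ?_⟩
  · intro z hz
    rw [hWΩ] at hz
    -- analytic structure in the interior
    have hana : AnalyticOnNhd ℂ u W := hholW.analyticOnNhd hWopen
    set g : ℂ → EuclideanSpace ℂ (Fin n) := deriv u with hgdef
    have hgana : AnalyticOnNhd ℂ g W := hana.deriv
    set g2 : ℂ → EuclideanSpace ℂ (Fin n) := deriv g with hg2def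
    have hg2ana : AnalyticOnNhd ℂ g2 W := hgana.deriv
    set g3 : ℂ → EuclideanSpace ℂ (Fin n) := deriv g2 with hg3def
    -- real Fréchet derivatives of holomorphic maps
    have hder : ∀ (h : ℂ → EuclideanSpace ℂ (Fin n)), AnalyticOnNhd ℂ h W → ∀ w ∈ W,
        HasFDerivAt h (((1 : ℂ →L[ℂ] ℂ).smulRight (deriv h w)).restrictScalars ℝ) w := by
      intro h hh w hw
      exact ((hh w hw).differentiableAt.hasDerivAt.hasFDerivAt).restrictScalars ℝ
    have happ : ∀ (c : EuclideanSpace ℂ (Fin n)) (v : ℂ),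
        (((1 : ℂ →L[ℂ] ℂ).smulRight c).restrictScalars ℝ) v = v • c := by
      intro c v; simp
    -- F agrees with g on W
    have hge : ∀ w ∈ W, F w = g w := by
      intro w hw
      have hd : DifferentiableAt ℂ u w := (hana w hw).differentiableAt
      rw [hFdef]
      show fderiv ℝ u w 1 = g w
      rw [hd.fderiv_restrictScalars ℝ]
      simp only [ContinuousLinearMap.coe_restrictScalars']
      rw [hgdef, ← fderiv_apply_one_eq_deriv]
    have heq : (fun w => ‖fderiv ℝ u w 1‖ ^ 2) =ᶠ[nhds z] (fun w => ‖g w‖ ^ 2) := by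
      filter_upwards [hWopen.mem_nhds hz] with w hw
      rw [show fderiv ℝ u w 1 = F w from rfl, hge w hw]
    -- smoothness of ‖g‖² near z
    have hgc2 : ContDiffAt ℝ 2 (fun w => ‖g w‖ ^ 2) z := by
      have : ContDiffAt ℂ 2 g z := (hgana z hz).contDiffAt
      exact (this.restrict_scalars ℝ).norm_sq ℂ
    have hd2 : DifferentiableAt ℝ (fderiv ℝ (fun w => ‖g w‖ ^ 2)) z :=
      (hgc2.fderiv_right (by norm_num : (1 : WithTop ℕ∞) + 1 ≤ 2)).differentiableAt one_ne_zero
    -- the key directional second derivative computation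
    have key : ∀ v : ℂ, fderiv ℝ (fderiv ℝ (fun w => ‖fderiv ℝ u w 1‖ ^ 2)) z v v
        = 2 * (v * (v * ⟪g z, g3 z⟫ + (starRingEnd ℂ v) * ⟪g2 z, g2 z⟫)).re := by
      intro v
      rw [heq.fderiv.fderiv_eq]
      -- reduce to the derivative of the scalar function w ↦ fderiv e₂ w v
      have hred : fderiv ℝ (fderiv ℝ (fun w => ‖g w‖ ^ 2)) z v v
          = fderiv ℝ (fun w => fderiv ℝ (fun y => ‖g y‖ ^ 2) w v) z v := by
        rw [fderiv_clm_apply hd2 (differentiableAt_const v)]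
        simp
      rw [hred]
      -- on W this scalar function has an explicit formula
      have haux : (fun w => fderiv ℝ (fun y => ‖g y‖ ^ 2) w v)
          =ᶠ[nhds z] (fun w => 2 * (v * ⟪g w, g2 w⟫).re) := by
        filter_upwards [hWopen.mem_nhds hz] with w hw
        have hgw := hder g hgana w hw
        rw [normSq_fderiv_apply hgw v, happ]
        rw [inner_smul_right]
      rw [haux.fderiv_eq]
      -- differentiate the explicit formula
      have hgz := hder g hgana z hz
      have hg2z := hder g2 hg2ana z hz
      have hφ := hgz.inner ℂ hg2z
      have hs := hφ.const_smul v
      have hre := Complex.reCLM.hasFDerivAt.comp z hs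
      have hm := hre.const_mul (2 : ℝ)
      have heqfun : (fun w => 2 * (v * ⟪g w, g2 w⟫).re)
          = fun y => 2 * (⇑Complex.reCLM ∘ fun x => v • (⟪g x, g2 x⟫ : ℂ)) y := by
        funext w; simp [smul_eq_mul]
      rw [heqfun, show (fun x => v • (⟪g x, g2 x⟫ : ℂ)) = v • fun x => ⟪g x, g2 x⟫ from rfl,
        hm.fderiv, hg3def, hg2def]
      exact eval_lemma _ _ _ _ v
    -- assemble the Laplacian
    have hlap : lapC (fun w => ‖fderiv ℝ u w 1‖ ^ 2) z
        = fderiv ℝ (fderiv ℝ (fun w => ‖fderiv ℝ u w 1‖ ^ 2)) z 1 1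
          + fderiv ℝ (fderiv ℝ (fun w => ‖fderiv ℝ u w 1‖ ^ 2)) z Complex.I Complex.I := by
      rw [lapC, iteratedFDeriv_two_apply, iteratedFDeriv_two_apply]
    have hb : (⟪g2 z, g2 z⟫ : ℂ).re = ‖g2 z‖ ^ 2 := by
      have := inner_self_eq_norm_sq (𝕜 := ℂ) (g2 z)
      simpa [RCLike.re_to_complex] using this
    have hval : lapC (fun w => ‖fderiv ℝ u w 1‖ ^ 2) z = 4 * ‖g2 z‖ ^ 2 := by
      rw [hlap, key 1, key Complex.I]
      have h1 : ((1 : ℂ) * ((1 : ℂ) * ⟪g z, g3 z⟫ + (starRingEnd ℂ (1 : ℂ)) * ⟪g2 z, g2 z⟫))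
          = ⟪g z, g3 z⟫ + ⟪g2 z, g2 z⟫ := by simp
      have h2 : (Complex.I * (Complex.I * ⟪g z, g3 z⟫
          + (starRingEnd ℂ Complex.I) * ⟪g2 z, g2 z⟫))
          = -⟪g z, g3 z⟫ + ⟪g2 z, g2 z⟫ := by
        rw [Complex.conj_I]
        ring_nf
        rw [Complex.I_sq]
        ring
      rw [h1, h2]
      rw [Complex.add_re, Complex.add_re, Complex.neg_re, hb]
      ring
    -- identify the right-hand side
    have hrhs : fderiv ℝ (fun w => fderiv ℝ u w 1) z 1 = g2 z := by
      have hFg : (fun w => fderiv ℝ u w 1) =ᶠ[nhds z] g := by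
        filter_upwards [hWopen.mem_nhds hz] with w hw
        exact hge w hw
      rw [hFg.fderiv_eq, (hder g hgana z hz).fderiv, happ]
      simp
      rw [hg2def]
    constructor
    · rw [hval, hrhs]
    · rw [hval]
      positivity
  · -- boundary part
    intro s hs
    have hsV : (s : ℂ) ∈ V := (hΩ ▸ hs).1
    have hsU : (s : ℂ) ∈ U := hΩU hs
    have hFz : DifferentiableAt ℝ F (s : ℂ) := hFdiff _ hsU
    -- derivative of energy in direction I
    have he' : fderiv ℝ (fun w => ‖fderiv ℝ u w 1‖ ^ 2) (s : ℂ) Complex.I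
        = 2 * (⟪F (s : ℂ), fderiv ℝ F (s : ℂ) Complex.I⟫).re :=
      normSq_fderiv_apply hFz.hasFDerivAt Complex.I
    -- Clairaut symmetry
    have hu2 : ContDiffAt ℝ 2 u (s : ℂ) := hC2.contDiffAt (hU.mem_nhds hsU)
    have hdf : DifferentiableAt ℝ (fderiv ℝ u) (s : ℂ) :=
      (hu2.fderiv_right (by norm_num : (1:WithTop ℕ∞) + 1 ≤ 2)).differentiableAt one_ne_zero
    have hsymm := hu2.isSymmSndFDerivAt (by simp)
    have hmix : ∀ v : ℂ, fderiv ℝ (fun w => fderiv ℝ u w v) (s : ℂ)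
        = (fderiv ℝ (fderiv ℝ u) (s : ℂ)).flip v := by
      intro v
      rw [fderiv_clm_apply hdf (differentiableAt_const v)]
      simp
    have hclair : fderiv ℝ F (s : ℂ) Complex.I
        = fderiv ℝ (fun w => fderiv ℝ u w Complex.I) (s : ℂ) 1 := by
      rw [hFdef]
      rw [hmix 1, hmix Complex.I]
      simp only [ContinuousLinearMap.flip_apply]
      exact hsymm Complex.I 1
    -- neighborhood of s inside Ω on the real line
    have hOopen : IsOpen {x : ℝ | (x : ℂ) ∈ V} := hV.preimage Complex.continuous_ofReal
    have hOs : s ∈ {x : ℝ | (x : ℂ) ∈ V} := hsV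
    have hOΩ : ∀ x : ℝ, (x : ℂ) ∈ V → (x : ℂ) ∈ Ω := by
      intro x hx; rw [hΩ]; exact ⟨hx, by simp⟩
    have hOnhds : ∀ x : ℝ, (x : ℂ) ∈ V → {y : ℝ | (y : ℂ) ∈ V} ∈ nhds x := fun x hx =>
      hOopen.mem_nhds hx
    -- G := t-derivative; h := G - I•F vanishes on Ω
    have hHd : DifferentiableAt ℝ
        (fun w => fderiv ℝ u w Complex.I - Complex.I • fderiv ℝ u w 1) (s : ℂ) := by
      have h1 : DifferentiableAt ℝ (fun w => fderiv ℝ u w Complex.I) (s : ℂ) :=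
        hdf.clm_apply (differentiableAt_const _)
      exact h1.sub (hFz.const_smul Complex.I)
    have hHzero : fderiv ℝ
        (fun w => fderiv ℝ u w Complex.I - Complex.I • fderiv ℝ u w 1) (s : ℂ) 1 = 0 := by
      apply fderiv_one_eq_zero_of_eventually_zero hHd
      filter_upwards [hOnhds s hsV] with x hx
      have := hCR _ (hOΩ x hx)
      simp [this]
    have hGF : fderiv ℝ (fun w => fderiv ℝ u w Complex.I) (s : ℂ) 1
        = Complex.I • fderiv ℝ F (s : ℂ) 1 := by
      have h1 : DifferentiableAt ℝ (fun w => fderiv ℝ u w Complex.I) (s : ℂ) :=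
        hdf.clm_apply (differentiableAt_const _)
      have hsub := fderiv_fun_sub (g := fun w => Complex.I • F w) h1 (hFz.const_smul Complex.I)
      have happ := congrArg (fun L : ℂ →L[ℝ] EuclideanSpace ℂ (Fin n) => L 1) hsub
      simp only [ContinuousLinearMap.sub_apply] at happ
      rw [hHzero] at happ
      have hcs := fderiv_fun_const_smul (𝕜 := ℝ) hFz Complex.I
      have happ2 := congrArg (fun L : ℂ →L[ℝ] EuclideanSpace ℂ (Fin n) => L 1) hcs
      simp only [ContinuousLinearMap.smul_apply] at happ2
      have : fderiv ℝ (fun w => fderiv ℝ u w Complex.I) (s : ℂ) 1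
          - fderiv ℝ (fun w => Complex.I • F w) (s : ℂ) 1 = 0 := happ.symm
      rw [sub_eq_zero] at this
      rw [this, hFdef] at *
      rw [happ2]
    -- combine Clairaut and CR-derivative
    have hFI : fderiv ℝ F (s : ℂ) Complex.I = Complex.I • fderiv ℝ F (s : ℂ) 1 := by
      rw [hclair, hGF]
    -- coordinate functionals
    set L : Fin n → (EuclideanSpace ℂ (Fin n) →L[ℝ] ℝ) :=
      fun j => Complex.imCLM.comp ((EuclideanSpace.proj j).restrictScalars ℝ) with hLdef
    have hLapp : ∀ (j : Fin n) (x : EuclideanSpace ℂ (Fin n)), L j x = (x j).im := by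
      intro j x; simp [hLdef]
    -- F is real at real points of V
    have hFreal : ∀ x : ℝ, (x : ℂ) ∈ V → ∀ j, ((F (x : ℂ)) j).im = 0 := by
      intro x hx j
      have hxU : (x : ℂ) ∈ U := hΩU (hOΩ x hx)
      have hud : DifferentiableAt ℝ u (x : ℂ) :=
        (hC2.differentiableOn two_ne_zero).differentiableAt (hU.mem_nhds hxU)
      have hcd : DifferentiableAt ℝ (fun w => L j (u w)) (x : ℂ) :=
        ((L j).hasFDerivAt.comp _ hud.hasFDerivAt).differentiableAt
      have h0 : ∀ᶠ y : ℝ in nhds x, L j (u (y : ℂ)) = 0 := by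
        filter_upwards [hOnhds x hx] with y hy
        rw [hLapp]; exact hbdry y (hOΩ y hy) j
      have hres := fderiv_one_eq_zero_of_eventually_zero hcd h0
      have hch : fderiv ℝ (fun w => L j (u w)) (x : ℂ) = (L j).comp (fderiv ℝ u (x : ℂ)) :=
        ((L j).hasFDerivAt.comp _ hud.hasFDerivAt).fderiv
      rw [hch] at hres
      have h2 : L j (F (x : ℂ)) = 0 := by simpa [hFdef] using hres
      rw [hLapp] at h2
      exact h2
    have hF2real : ∀ j, ((fderiv ℝ F (s : ℂ) 1) j).im = 0 := by
      intro j
      have hcd : DifferentiableAt ℝ (fun w => L j (F w)) (s : ℂ) :=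
        ((L j).hasFDerivAt.comp _ hFz.hasFDerivAt).differentiableAt
      have h0 : ∀ᶠ y : ℝ in nhds s, L j (F (y : ℂ)) = 0 := by
        filter_upwards [hOnhds s hsV] with y hy
        rw [hLapp]; exact hFreal y hy j
      have hres := fderiv_one_eq_zero_of_eventually_zero hcd h0
      have hch : fderiv ℝ (fun w => L j (F w)) (s : ℂ) = (L j).comp (fderiv ℝ F (s : ℂ)) :=
        ((L j).hasFDerivAt.comp _ hFz.hasFDerivAt).fderiv
      rw [hch] at hres
      have h2 : L j (fderiv ℝ F (s : ℂ) 1) = 0 := by simpa using hres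
      rw [hLapp] at h2
      exact h2
    -- conclude
    rw [he', hFI]
    have hinner : (⟪F (s : ℂ), Complex.I • fderiv ℝ F (s : ℂ) 1⟫ : ℂ)
        = Complex.I * ⟪F (s : ℂ), fderiv ℝ F (s : ℂ) 1⟫ := inner_smul_right _ _ _
    rw [hinner]
    have him0 : (⟪F (s : ℂ), fderiv ℝ F (s : ℂ) 1⟫ : ℂ).im = 0 := by
      rw [PiLp.inner_apply]
      rw [Complex.im_sum]
      apply Finset.sum_eq_zero
      intro j _
      rw [RCLike.inner_apply]
      simp [Complex.mul_im, Complex.conj_re, Complex.conj_im, hFreal s hsV j, hF2real j]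
    rw [Complex.mul_re, Complex.I_re, Complex.I_im, him0]
    ring

end EnergyDensityAux
end

section
/- Compactness for holomorphic strips with linear Lagrangian boundary conditions and locally bounded energy density (the flat-target case of Theorem 3.4, case (symp)): Let n ≥ 1 and let u_i : ℝ×[0,1] → ℂⁿ be a sequence of continuous maps, holomorphic on the open strip ℝ×(0,1), satisfying u_i(s,0) ∈ ℝⁿ and u_i(s,1) ∈ iℝⁿ for all s ∈ ℝ. Suppose the energy densities ‖∂_s u_i‖² are uniformly bounded on every compact subset of ℝ×[0,1], and that the sequence of values u_i(0,0) is bounded in ℂⁿ. Then there is a subsequence (u_{i_k}) and a continuous map u : ℝ×[0,1] → ℂⁿ, holomorphic on the open strip and satisfying the same Lagrangian boundary conditions, such that u_{i_k} → u uniformly on every compact subset of the closed strip and uniformly with all derivatives on every compact subset of the open strip ℝ×(0,1). -/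
open Filter Set Metric Topology

lemma lipschitzOnWith_closure_aux {E : Type*} [NormedAddCommGroup E]
    {f : ℂ → E} {s : Set ℂ} {C : NNReal}
    (hc : ContinuousOn f (closure s)) (hl : LipschitzOnWith C f s) :
    LipschitzOnWith C f (closure s) := by
  rw [lipschitzOnWith_iff_dist_le_mul] at hl ⊢
  intro x hx y hy
  rcases mem_closure_iff_seq_limit.mp hx with ⟨a, ha, hax⟩
  rcases mem_closure_iff_seq_limit.mp hy with ⟨b, hb, hby⟩
  have hfa : Tendsto (fun k => f (a k)) atTop (𝓝 (f x)) := by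
    refine (hc x hx).tendsto.comp ?_
    exact tendsto_nhdsWithin_iff.mpr ⟨hax, Eventually.of_forall fun k => subset_closure (ha k)⟩
  have hfb : Tendsto (fun k => f (b k)) atTop (𝓝 (f y)) := by
    refine (hc y hy).tendsto.comp ?_
    exact tendsto_nhdsWithin_iff.mpr ⟨hby, Eventually.of_forall fun k => subset_closure (hb k)⟩
  exact le_of_tendsto_of_tendsto' (hfa.dist hfb) ((hax.dist hby).const_mul (C : ℝ))
    fun k => hl _ (ha k) _ (hb k)

/-- Compactness for holomorphic strips with linear Lagrangian boundary conditions
`L₀ = ℝⁿ`, `L₁ = iℝⁿ` and locally uniformly bounded energy density (flat-target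
case of Theorem 3.4, case (symp)): a subsequence converges uniformly on compact
subsets of the closed strip, and with all derivatives on compact subsets of the
open strip, to a limit satisfying the same equation and boundary conditions. -/
theorem compactness_holomorphic_strips (n : ℕ) (hn : 1 ≤ n)
    (u : ℕ → ℂ → EuclideanSpace ℂ (Fin n))
    (hcont : ∀ i, ContinuousOn (u i) {z : ℂ | 0 ≤ z.im ∧ z.im ≤ 1})
    (hhol : ∀ i, DifferentiableOn ℂ (u i) {z : ℂ | 0 < z.im ∧ z.im < 1})
    (hb0 : ∀ i, ∀ s : ℝ, ∀ j, (u i (s : ℂ) j).im = 0)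
    (hb1 : ∀ i, ∀ s : ℝ, ∀ j, (u i ((s : ℂ) + Complex.I) j).re = 0)
    (hdens : ∀ K : Set ℂ, IsCompact K → K ⊆ {z : ℂ | 0 ≤ z.im ∧ z.im ≤ 1} →
      ∃ M : ℝ, ∀ i, ∀ z ∈ K ∩ {z : ℂ | 0 < z.im ∧ z.im < 1},
        ‖deriv (u i) z‖ ^ 2 ≤ M)
    (hval : ∃ M₀ : ℝ, ∀ i, ‖u i 0‖ ≤ M₀) :
    ∃ φ : ℕ → ℕ, StrictMono φ ∧
      ∃ v : ℂ → EuclideanSpace ℂ (Fin n),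
        ContinuousOn v {z : ℂ | 0 ≤ z.im ∧ z.im ≤ 1} ∧
        DifferentiableOn ℂ v {z : ℂ | 0 < z.im ∧ z.im < 1} ∧
        (∀ s : ℝ, ∀ j, (v (s : ℂ) j).im = 0) ∧
        (∀ s : ℝ, ∀ j, (v ((s : ℂ) + Complex.I) j).re = 0) ∧
        (∀ K : Set ℂ, IsCompact K → K ⊆ {z : ℂ | 0 ≤ z.im ∧ z.im ≤ 1} →
          TendstoUniformlyOn (fun k => u (φ k)) v atTop K) ∧
        (∀ K : Set ℂ, IsCompact K → K ⊆ {z : ℂ | 0 < z.im ∧ z.im < 1} → ∀ m : ℕ,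
          TendstoUniformlyOn (fun k z => iteratedDeriv m (u (φ k)) z)
            (fun z => iteratedDeriv m v z) atTop K) := by
  classical
  obtain ⟨M₀, hM₀⟩ := hval
  set S : Set ℂ := {z : ℂ | 0 ≤ z.im ∧ z.im ≤ 1} with hSdef
  set O : Set ℂ := {z : ℂ | 0 < z.im ∧ z.im < 1} with hOdef
  have hSclosed : IsClosed S := by
    rw [hSdef, Set.setOf_and]
    exact (isClosed_le continuous_const Complex.continuous_im).inter
      (isClosed_le Complex.continuous_im continuous_const)
  have hOopen : IsOpen O := by
    rw [hOdef, Set.setOf_and]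
    exact (isOpen_lt continuous_const Complex.continuous_im).inter
      (isOpen_lt Complex.continuous_im continuous_const)
  have hOS : O ⊆ S := fun z hz => ⟨hz.1.le, hz.2.le⟩
  have hSconv : Convex ℝ S := by
    rw [hSdef, Set.setOf_and]
    exact (convex_halfSpace_im_ge 0).inter (convex_halfSpace_im_le 1)
  have hOconv : Convex ℝ O := by
    rw [hOdef, Set.setOf_and]
    exact (convex_halfSpace_im_gt 0).inter (convex_halfSpace_im_lt 1)
  -- norm of fderiv equals norm of deriv
  have hfderiv_norm : ∀ (f : ℂ → EuclideanSpace ℂ (Fin n)) (z : ℂ), DifferentiableAt ℂ f z →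
      ‖fderiv ℂ f z‖ ≤ ‖deriv f z‖ := by
    intro f z _
    refine ContinuousLinearMap.opNorm_le_bound _ (norm_nonneg _) fun w => ?_
    have h1 : fderiv ℂ f z w = w • deriv f z := by
      calc fderiv ℂ f z w = fderiv ℂ f z (w • (1 : ℂ)) := by norm_num
        _ = w • fderiv ℂ f z 1 := map_smul _ _ _
        _ = w • deriv f z := rfl
    rw [h1, norm_smul, mul_comm]
  -- the auxiliary interior point (1/2)·i of the strip
  set c : ℂ := (1 / 2 : ℝ) * Complex.I with hcdef
  have hcim : c.im = 1 / 2 := by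
    rw [hcdef]
    simp
  have hcnorm : ‖c‖ = 1 / 2 := by
    rw [hcdef, norm_mul, Complex.norm_real, Complex.norm_I]
    norm_num
  -- uniform Lipschitz bounds on truncated strips
  have key : ∀ r : ℝ, 1 ≤ r → ∃ C : NNReal,
      ∀ i, LipschitzOnWith C (u i) (closedBall (0 : ℂ) r ∩ S) := by
    intro r hr
    set T : Set ℂ := closedBall (0 : ℂ) r ∩ S with hT
    have hTS : T ⊆ S := inter_subset_right
    have hTcomp : IsCompact T := (isCompact_closedBall _ _).inter_right hSclosed
    obtain ⟨M, hM⟩ := hdens T hTcomp hTS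
    set C : NNReal := (Real.sqrt M).toNNReal with hC
    have hTconv : Convex ℝ T := (convex_closedBall _ _).inter hSconv
    have hTOconv : Convex ℝ (T ∩ O) := hTconv.inter hOconv
    have hlip : ∀ i, LipschitzOnWith C (u i) (T ∩ O) := by
      intro i
      refine hTOconv.lipschitzOnWith_of_nnnorm_fderiv_le
        (fun z hz => (hhol i).differentiableAt (hOopen.mem_nhds hz.2)) ?_
      intro z hz
      have hdz : DifferentiableAt ℂ (u i) z := (hhol i).differentiableAt (hOopen.mem_nhds hz.2)
      have h1 : ‖deriv (u i) z‖ ^ 2 ≤ M := hM i z hz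
      have h2 : ‖deriv (u i) z‖ ≤ Real.sqrt M := by
        have := Real.sqrt_le_sqrt h1
        rwa [Real.sqrt_sq (norm_nonneg _)] at this
      have h3 : ‖fderiv ℂ (u i) z‖ ≤ (C : ℝ) := by
        refine (hfderiv_norm _ _ hdz).trans (h2.trans ?_)
        rw [hC, Real.coe_toNNReal']
        exact le_max_left _ _
      exact_mod_cast h3
    have hmemc : c ∈ T ∩ O := by
      refine ⟨⟨?_, ?_, ?_⟩, ?_, ?_⟩
      · rw [mem_closedBall, dist_zero_right, hcnorm]; linarith
      · rw [hcim]; norm_num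
      · rw [hcim]; norm_num
      · rw [hcim]; norm_num
      · rw [hcim]; norm_num
    have hTclos : T ⊆ closure (T ∩ O) := by
      intro z hz
      rw [mem_closure_iff_seq_limit]
      refine ⟨fun k => (1 - (1 : ℝ) / (k + 1)) • z + ((1 : ℝ) / (k + 1)) • c,
        fun k => ?_, ?_⟩
      · have hε0 : (0 : ℝ) < 1 / (k + 1) := by positivity
        have hε1 : (1 : ℝ) / (k + 1) ≤ 1 := by
          rw [div_le_one (by positivity)]
          have : (0 : ℝ) ≤ (k : ℝ) := Nat.cast_nonneg k
          linarith
        have him : ((1 - (1 : ℝ) / (k + 1)) • z + ((1 : ℝ) / (k + 1)) • c).im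
            = (1 - 1 / (k + 1)) * z.im + (1 / (k + 1)) * (1 / 2) := by
          rw [Complex.add_im, Complex.smul_im, Complex.smul_im, hcim]
          simp only [smul_eq_mul]
        have hzim := hTS hz
        refine ⟨hTconv hz hmemc.1 (by linarith) hε0.le (by ring), ?_, ?_⟩
        · rw [him]
          have : (0 : ℝ) ≤ (1 - 1 / (k + 1)) * z.im :=
            mul_nonneg (by linarith) hzim.1
          have h2 : (0 : ℝ) < (1 / ((k : ℝ) + 1)) * (1 / 2) := by positivity
          show (0 : ℝ) < _
          linarith
        · rw [him]
          have h1 : (1 - 1 / ((k : ℝ) + 1)) * z.im ≤ 1 - 1 / (k + 1) := by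
            nlinarith [hzim.2, hzim.1]
          show _ < (1 : ℝ)
          have h2 : (1 / ((k : ℝ) + 1)) * (1 / 2) < 1 / (k + 1) := by
            nlinarith
          linarith
      · have hε : Tendsto (fun k : ℕ => (1 : ℝ) / (k + 1)) atTop (𝓝 0) :=
          tendsto_one_div_add_atTop_nhds_zero_nat
        have hcontmap : Continuous fun ε : ℝ => (1 - ε) • z + ε • c :=
          ((continuous_const.sub continuous_id).smul continuous_const).add
            (continuous_id.smul continuous_const)
        have := (hcontmap.tendsto' 0 z (by simp)).comp hε
        simpa [Function.comp_def] using this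
    refine ⟨C, fun i => ?_⟩
    have hcl : closure (T ∩ O) ⊆ S := by
      calc closure (T ∩ O) ⊆ closure T := closure_mono inter_subset_left
        _ = T := hTcomp.isClosed.closure_eq
        _ ⊆ S := hTS
    exact (lipschitzOnWith_closure_aux ((hcont i).mono hcl) (hlip i)).mono hTclos
  -- uniform pointwise bounds on truncated strips
  have h0S : (0 : ℂ) ∈ S := by
    rw [hSdef]
    constructor <;> simp
  have hbound : ∀ r : ℝ, 1 ≤ r → ∃ B : ℝ,
      ∀ i, ∀ z ∈ closedBall (0 : ℂ) r ∩ S, ‖u i z‖ ≤ B := by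
    intro r hr
    obtain ⟨C, hC⟩ := key r hr
    refine ⟨M₀ + C * r, fun i z hz => ?_⟩
    have h0 : (0 : ℂ) ∈ closedBall (0 : ℂ) r ∩ S :=
      ⟨mem_closedBall_self (by linarith), h0S⟩
    have hd := (hC i).dist_le_mul z hz 0 h0
    have hz0 : dist z 0 ≤ r := hz.1
    have h1 : ‖u i z‖ ≤ ‖u i 0‖ + dist (u i z) (u i 0) := by
      rw [dist_eq_norm]
      simpa using norm_add_le (u i 0) (u i z - u i 0)
    have h2 : (C : ℝ) * dist z 0 ≤ (C : ℝ) * r :=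
      mul_le_mul_of_nonneg_left hz0 C.coe_nonneg
    have := hM₀ i
    linarith
  -- Arzelà–Ascoli on the closed strip
  haveI : LocallyCompactSpace S := hSclosed.locallyCompactSpace
  haveI : SigmaCompactSpace S := hSclosed.sigmaCompactSpace
  set F : ℕ → C(S, EuclideanSpace ℂ (Fin n)) :=
    fun i => ⟨S.restrict (u i), (hcont i).restrict⟩ with hF
  haveI : T2Space (UniformOnFun (↥S) (EuclideanSpace ℂ (Fin n)) {K : Set ↥S | IsCompact K}) :=
    UniformOnFun.t2Space_of_covering (by
      rw [Set.eq_univ_iff_forall]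
      exact fun x => mem_sUnion.mpr ⟨{x}, isCompact_singleton, rfl⟩)
  have hclemb : Topology.IsClosedEmbedding
      (UniformOnFun.ofFun {K : Set ↥S | IsCompact K} ∘
        (DFunLike.coe : C(S, EuclideanSpace ℂ (Fin n)) → ↥S → EuclideanSpace ℂ (Fin n))) :=
    ContinuousMap.isUniformEmbedding_toUniformOnFunIsCompact.isClosedEmbedding
  have hcompce : IsCompact (closure (Set.range F)) := by
    refine ArzelaAscoli.isCompact_closure_of_isClosedEmbedding (fun K hK => hK) hclemb
      (fun K _ => Equicontinuous.equicontinuousOn ?_ K) ?_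
    · -- equicontinuity
      intro x
      rw [Metric.equicontinuousAt_iff]
      intro ε hε
      have hr1 : (1 : ℝ) ≤ ‖(x : ℂ)‖ + 1 := by
        have := norm_nonneg (x : ℂ); linarith
      obtain ⟨C, hC⟩ := key (‖(x : ℂ)‖ + 1) hr1
      refine ⟨min (ε / (C + 1)) 1, by positivity, fun y hy g => ?_⟩
      obtain ⟨i, hi⟩ := g.2
      have hyx : dist (y : ℂ) (x : ℂ) < min (ε / (C + 1)) 1 := by
        rwa [← Subtype.dist_eq]
      have hxmem : (x : ℂ) ∈ closedBall (0 : ℂ) (‖(x : ℂ)‖ + 1) ∩ S := by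
        refine ⟨?_, x.2⟩
        rw [mem_closedBall, dist_zero_right]; linarith
      have hymem : (y : ℂ) ∈ closedBall (0 : ℂ) (‖(x : ℂ)‖ + 1) ∩ S := by
        refine ⟨?_, y.2⟩
        rw [mem_closedBall, dist_zero_right]
        have h1 : dist (y : ℂ) (x : ℂ) < 1 := lt_of_lt_of_le hyx (min_le_right _ _)
        calc ‖(y : ℂ)‖ ≤ ‖(x : ℂ)‖ + dist (y : ℂ) (x : ℂ) := by
              rw [dist_eq_norm]
              simpa [add_comm] using norm_add_le ((y : ℂ) - (x : ℂ)) (x : ℂ)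
          _ ≤ ‖(x : ℂ)‖ + 1 := by linarith
      have hdist : dist (u i (y : ℂ)) (u i (x : ℂ)) ≤ (C : ℝ) * dist (y : ℂ) (x : ℂ) :=
        (hC i).dist_le_mul _ hymem _ hxmem
      have hgval : ∀ w : ↥S, (g : C(S, EuclideanSpace ℂ (Fin n))) w = u i w := by
        intro w
        rw [← hi]
        rfl
      simp only [Function.comp_apply]
      rw [hgval x, hgval y, dist_comm]
      have hC1 : (0 : ℝ) < (C : ℝ) + 1 := by positivity
      have h2 : (C : ℝ) * dist (y : ℂ) (x : ℂ) < ε := by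
        have h3 : dist (y : ℂ) (x : ℂ) ≤ ε / (C + 1) :=
          le_of_lt (lt_of_lt_of_le hyx (min_le_left _ _))
        have h4 : (C : ℝ) * dist (y : ℂ) (x : ℂ) ≤ (C : ℝ) * (ε / (C + 1)) :=
          mul_le_mul_of_nonneg_left h3 C.coe_nonneg
        have h5 : (C : ℝ) * (ε / (C + 1)) < ε := by
          rw [mul_div_assoc', div_lt_iff₀ hC1]
          nlinarith [C.coe_nonneg]
        linarith
      exact lt_of_le_of_lt hdist h2
    · -- pointwise compactness
      intro K _ x _
      have hr1 : (1 : ℝ) ≤ ‖(x : ℂ)‖ + 1 := by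
        have := norm_nonneg (x : ℂ); linarith
      obtain ⟨B, hB⟩ := hbound (‖(x : ℂ)‖ + 1) hr1
      refine ⟨closedBall 0 B, isCompact_closedBall _ _, fun g hg => ?_⟩
      obtain ⟨i, rfl⟩ := hg
      rw [mem_closedBall, dist_zero_right]
      refine hB i (x : ℂ) ⟨?_, x.2⟩
      rw [mem_closedBall, dist_zero_right]; linarith
  obtain ⟨g, -, φ, hφ, hconv⟩ :=
    hcompce.isSeqCompact (fun k => subset_closure (Set.mem_range_self k))
  refine ⟨φ, hφ, ?_⟩
  set v : ℂ → EuclideanSpace ℂ (Fin n) :=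
    fun z => if h : z ∈ S then g ⟨z, h⟩ else 0 with hv
  have hvx : ∀ x : ↥S, v ↑x = g x := fun x => dif_pos x.2
  -- uniform convergence on compact subsets of the closed strip
  have hufK : ∀ K : Set ℂ, IsCompact K → K ⊆ S →
      TendstoUniformlyOn (fun k => u (φ k)) v atTop K := by
    intro K hK hKS
    have hK' : IsCompact (Subtype.val ⁻¹' K : Set ↥S) := by
      rw [Topology.IsEmbedding.subtypeVal.isCompact_iff]
      have him : Subtype.val '' (Subtype.val ⁻¹' K : Set ↥S) = K := by
        rw [Subtype.image_preimage_coe]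
        exact inter_eq_self_of_subset_right hKS
      rwa [him]
    have h1 := ContinuousMap.tendsto_iff_forall_isCompact_tendstoUniformlyOn.mp hconv
      (Subtype.val ⁻¹' K) hK'
    rw [Metric.tendstoUniformlyOn_iff] at h1 ⊢
    intro ε hε
    filter_upwards [h1 ε hε] with k hk z hz
    have h2 := hk ⟨z, hKS hz⟩ hz
    have h3 : v z = g ⟨z, hKS hz⟩ := dif_pos (hKS hz)
    rw [h3]
    exact h2
  -- continuity of the limit
  have hcv : ContinuousOn v S := by
    rw [continuousOn_iff_continuous_restrict]
    have : S.restrict v = ⇑g := funext fun x => hvx x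
    rw [show S.domRestrict v = ⇑g from this]
    exact g.continuous
  -- local uniform convergence on the open strip
  have htlu : TendstoLocallyUniformlyOn (fun k => u (φ k)) v atTop O := by
    rw [tendstoLocallyUniformlyOn_iff_forall_isCompact hOopen]
    exact fun K hKO hK => hufK K hK (hKO.trans hOS)
  have hdv : DifferentiableOn ℂ v O :=
    htlu.differentiableOn (Eventually.of_forall fun k => hhol (φ k)) hOopen
  -- projections are continuous
  have hprojim : ∀ j : Fin n, Continuous fun w : EuclideanSpace ℂ (Fin n) => (w j).im :=
    fun j => Complex.continuous_im.comp (EuclideanSpace.proj (𝕜 := ℂ) j).continuous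
  have hprojre : ∀ j : Fin n, Continuous fun w : EuclideanSpace ℂ (Fin n) => (w j).re :=
    fun j => Complex.continuous_re.comp (EuclideanSpace.proj (𝕜 := ℂ) j).continuous
  -- boundary conditions for v
  have hvb0 : ∀ s : ℝ, ∀ j, (v (s : ℂ) j).im = 0 := by
    intro s j
    have hzS : ((s : ℂ)) ∈ S := by
      rw [hSdef]
      constructor <;> simp
    have h1 : Tendsto (fun k => u (φ k) (s : ℂ)) atTop (𝓝 (v (s : ℂ))) :=
      (hufK {(s : ℂ)} isCompact_singleton (singleton_subset_iff.mpr hzS)).tendsto_at rfl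
    have h2 : Tendsto (fun k => ((u (φ k) (s : ℂ)) j).im) atTop (𝓝 ((v (s : ℂ) j).im)) :=
      ((hprojim j).tendsto _).comp h1
    have h3 : (fun k => ((u (φ k) (s : ℂ)) j).im) = fun _ => (0 : ℝ) :=
      funext fun k => hb0 (φ k) s j
    rw [h3] at h2
    exact tendsto_nhds_unique h2 tendsto_const_nhds
  have hvb1 : ∀ s : ℝ, ∀ j, (v ((s : ℂ) + Complex.I) j).re = 0 := by
    intro s j
    have hzS : ((s : ℂ) + Complex.I) ∈ S := by
      rw [hSdef]
      constructor <;> simp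
    have h1 : Tendsto (fun k => u (φ k) ((s : ℂ) + Complex.I)) atTop
        (𝓝 (v ((s : ℂ) + Complex.I))) :=
      (hufK {((s : ℂ) + Complex.I)} isCompact_singleton
        (singleton_subset_iff.mpr hzS)).tendsto_at rfl
    have h2 : Tendsto (fun k => ((u (φ k) ((s : ℂ) + Complex.I)) j).re) atTop
        (𝓝 ((v ((s : ℂ) + Complex.I) j).re)) :=
      ((hprojre j).tendsto _).comp h1
    have h3 : (fun k => ((u (φ k) ((s : ℂ) + Complex.I)) j).re) = fun _ => (0 : ℝ) :=
      funext fun k => hb1 (φ k) s j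
    rw [h3] at h2
    exact tendsto_nhds_unique h2 tendsto_const_nhds
  -- iterated derivatives of analytic functions are analytic
  have hAniter : ∀ (m : ℕ) (f : ℂ → EuclideanSpace ℂ (Fin n)),
      AnalyticOnNhd ℂ f O → AnalyticOnNhd ℂ (iteratedDeriv m f) O := by
    intro m
    induction m with
    | zero => intro f hf; simpa [iteratedDeriv_zero] using hf
    | succ m ih =>
      intro f hf
      rw [iteratedDeriv_succ]
      exact (ih f hf).deriv
  have H : ∀ m, TendstoLocallyUniformlyOn (fun k => iteratedDeriv m (u (φ k)))
      (iteratedDeriv m v) atTop O := by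
    intro m
    induction m with
    | zero => simpa [iteratedDeriv_zero] using htlu
    | succ m ih =>
      have := ih.deriv (Eventually.of_forall fun k =>
        (hAniter m _ ((hhol (φ k)).analyticOnNhd hOopen)).differentiableOn) hOopen
      simpa [iteratedDeriv_succ, Function.comp_def] using this
  refine ⟨v, hcv, hdv, hvb0, hvb1, fun K hK hKS => hufK K hK hKS, ?_⟩
  intro K hK hKO m
  exact (tendstoLocallyUniformlyOn_iff_forall_isCompact hOopen).mp (H m) K hKO hK
end
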